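/- Let G = (V, E) be a finite bipartite simple graph without isolated vertices. Then G is a unique key graph if and only if E is a perfect matching of G, i.e. every vertex of G has degree exactly one. -/

import Mathlib

open scoped Classical

variable {V : Type*} [Fintype V] [DecidableEq V]

/-- A Sperner hypergraph: no hyperedge contains another one. -/
def SpernerFam (𝓑 : Set (Finset V)) : Prop :=
  ∀ B₁ ∈ 𝓑, ∀ B₂ ∈ 𝓑, B₁ ⊆ B₂ → B₁ = B₂

/-- `T` is a transversal of `𝓑` if it meets every hyperedge. -/
def IsTransversal (𝓑 : Set (Finset V)) (T : Finset V) : Prop :=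
  ∀ B ∈ 𝓑, (T ∩ B).Nonempty

/-- `𝓑^d`: the family of inclusion-minimal transversals of `𝓑`. -/
def dualHyp (𝓑 : Set (Finset V)) : Set (Finset V) :=
  {T | IsTransversal 𝓑 T ∧ ∀ T', IsTransversal 𝓑 T' → T' ⊆ T → T' = T}

/-- A Boolean function `h` on `V` is pure Horn if its set of true assignments contains the
all-true assignment and is closed under componentwise AND. -/
def PureHorn (h : (V → Bool) → Bool) : Prop :=
  h (fun _ => true) = true ∧
  ∀ x y : V → Bool, h x = true → h y = true → h (fun v => x v && y v) = true

/-- The clause `A → v` is an implicate of `h`: every true assignment of `h` that is true on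
every element of `A` is also true at `v`. -/
def Implicate (h : (V → Bool) → Bool) (A : Finset V) (v : V) : Prop :=
  ∀ x : V → Bool, h x = true → (∀ a ∈ A, x a = true) → x v = true

/-- `K` is a key of `h` if `K → v` is an implicate of `h` for every `v ∈ V \ K`. -/
def IsKey (h : (V → Bool) → Bool) (K : Finset V) : Prop :=
  ∀ v ∉ K, Implicate h K v

/-- `𝒦(h)`: the family of inclusion-minimal keys of `h`. -/
def minKeys (h : (V → Bool) → Bool) : Set (Finset V) :=
  {K | IsKey h K ∧ ∀ K', IsKey h K' → K' ⊆ K → K' = K}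

/-- `Φ_𝓑`: the pure Horn function whose true assignments are exactly those `x` such that for
every `B ∈ 𝓑` on which `x` is identically true, `x` is identically true on all of `V`. -/
noncomputable def PhiB (𝓑 : Set (Finset V)) : (V → Bool) → Bool :=
  fun x => decide (∀ B ∈ 𝓑, (∀ u ∈ B, x u = true) → ∀ v : V, x v = true)

/-- `𝓑` is a unique key hypergraph: `Φ_𝓑` is the unique pure Horn function `h`
with `𝒦(h) = 𝓑`. -/
def UniqueKeyHypergraph (𝓑 : Set (Finset V)) : Prop :=
  minKeys (PhiB 𝓑) = 𝓑 ∧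
  ∀ h : (V → Bool) → Bool, PureHorn h → minKeys h = 𝓑 → h = PhiB 𝓑

/-- The edge set of a simple graph viewed as a hypergraph of two-element sets. -/
def edgeFam (G : SimpleGraph V) : Set (Finset V) :=
  {e | ∃ u v : V, G.Adj u v ∧ e = {u, v}}

/-!
If the minimal keys of a pure Horn function `h` are the edges of `G`, then the keys of `h` are
exactly the vertex sets that are not independent, and every true point of `h` is a true point of
`Φ_E`. When `E` is a perfect matching the converse holds. Let `x ≠ 1` be a true point of `Φ_E`, so
its support `S` is independent. Were some `v ∉ S` in the `h`-closure of `S`, then `S ∪ {u}`, for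
the partner `u` of `v`, would be a key (its closure contains the edge `uv`), yet it is independent
because `v` is the only neighbour of `u`. So `S` is `h`-closed and `h x` holds.

When some vertex has two neighbours, the pure Horn function whose true points are the
intersections of maximal independent sets has the same keys as `Φ_E`. In a bipartite graph one
finds an independent set `S` and a vertex `v ∉ S` all of whose neighbours have a neighbour in `S`,
so `v` lies in every maximal independent set containing `S`, and the two functions differ at the
indicator of `S`.
-/

open Finset

section HornClosure

variable {h : (V → Bool) → Bool}

noncomputable def hornClosure (h : (V → Bool) → Bool) (x : V → Bool) : V → Bool :=
  {z | h z = true ∧ x ≤ z}.toFinset.inf id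

theorem PureHorn.apply_hornClosure_eq_true (hh : PureHorn h) (x : V → Bool) :
    h (hornClosure h x) = true :=
  Finset.inf_induction hh.1 (fun a ha b hb => hh.2 a b ha hb) (by simp +contextual)

theorem le_hornClosure (x : V → Bool) : x ≤ hornClosure h x :=
  Finset.le_inf (by simp +contextual)

theorem hornClosure_le {x z : V → Bool} (hz : h z = true) (hxz : x ≤ z) :
    hornClosure h x ≤ z :=
  Finset.inf_le (f := id) (by simp [hz, hxz])

end HornClosure

section Keys

variable {h : (V → Bool) → Bool} {𝓑 : Set (Finset V)} {K : Finset V}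

omit [Fintype V] in
theorem isKey_iff :
    IsKey h K ↔ ∀ x, h x = true → (∀ a ∈ K, x a = true) → ∀ v, x v = true := by
  refine ⟨fun hK x hx hxK v => ?_, fun hK v _ x hx hxK => hK x hx hxK v⟩
  by_cases hv : v ∈ K
  · exact hxK v hv
  · exact hK v hv x hx hxK

omit [Fintype V] in
theorem IsKey.mono {K' : Finset V} (hK : IsKey h K) (hKK' : K ⊆ K') : IsKey h K' :=
  isKey_iff.2 fun x hx hxK' => isKey_iff.1 hK x hx fun a ha => hxK' a (hKK' ha)

omit [DecidableEq V] in
theorem exists_mem_minKeys_subset (hK : IsKey h K) : ∃ K' ∈ minKeys h, K' ⊆ K := by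
  obtain ⟨K', hK'K, hmin⟩ := Finite.exists_le_minimal hK
  exact ⟨K', ⟨hmin.prop, fun K'' hK'' hsub => hmin.eq_of_le hK'' hsub⟩, hK'K⟩

theorem isKey_iff_of_minKeys_eq (hk : minKeys h = 𝓑) : IsKey h K ↔ ∃ B ∈ 𝓑, B ⊆ K := by
  subst hk
  exact ⟨exists_mem_minKeys_subset, fun ⟨B, hB, hBK⟩ => hB.1.mono hBK⟩

omit [Fintype V] [DecidableEq V] in
theorem minKeys_eq_of_isKey_iff (hS : SpernerFam 𝓑) (hkey : ∀ K, IsKey h K ↔ ∃ B ∈ 𝓑, B ⊆ K) :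
    minKeys h = 𝓑 := by
  ext K
  constructor
  · rintro ⟨hK, hmin⟩
    obtain ⟨B, hB, hBK⟩ := (hkey K).1 hK
    rwa [← hmin B ((hkey B).2 ⟨B, hB, subset_rfl⟩) hBK]
  · intro hK
    refine ⟨(hkey K).2 ⟨K, hK, subset_rfl⟩, fun K' hK' hK'K => ?_⟩
    obtain ⟨B, hB, hBK'⟩ := (hkey K').1 hK'
    exact subset_antisymm hK'K (hS B hB K hK (hBK'.trans hK'K) ▸ hBK')

theorem phiB_eq_true_iff {x : V → Bool} :
    PhiB 𝓑 x = true ↔ ∀ B ∈ 𝓑, (∀ u ∈ B, x u = true) → ∀ v, x v = true :=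
  decide_eq_true_iff

theorem phiB_eq_true_of_minKeys_eq (hk : minKeys h = 𝓑) {x : V → Bool} (hx : h x = true) :
    PhiB 𝓑 x = true :=
  phiB_eq_true_iff.2 fun B hB hxB =>
    isKey_iff.1 ((isKey_iff_of_minKeys_eq hk).2 ⟨B, hB, subset_rfl⟩) x hx hxB

theorem isKey_phiB_iff (h𝓑 : 𝓑.Nonempty) : IsKey (PhiB 𝓑) K ↔ ∃ B ∈ 𝓑, B ⊆ K := by
  refine ⟨fun hK => ?_, fun ⟨B, hB, hBK⟩ => isKey_iff.2 fun x hx hxK =>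
    phiB_eq_true_iff.1 hx B hB fun u hu => hxK u (hBK hu)⟩
  by_contra hno
  -- the indicator of `K` is a true point of `Φ_𝓑` that is true on `K`, so `K = V`
  have hind : PhiB 𝓑 (fun a => decide (a ∈ K)) = true :=
    phiB_eq_true_iff.2 fun B hB hBK =>
      absurd ⟨B, hB, fun u hu => by simpa using hBK u hu⟩ hno
  have hKuniv := isKey_iff.1 hK _ hind (by simp)
  obtain ⟨B, hB⟩ := h𝓑
  exact hno ⟨B, hB, fun u _ => by simpa using hKuniv u⟩

theorem minKeys_phiB (hS : SpernerFam 𝓑) (h𝓑 : 𝓑.Nonempty) : minKeys (PhiB 𝓑) = 𝓑 :=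
  minKeys_eq_of_isKey_iff hS fun _ => isKey_phiB_iff h𝓑

end Keys

theorem SimpleGraph.isIndepSet_iff_forall_not_adj {α : Type*} {G : SimpleGraph α} {s : Set α} :
    G.IsIndepSet s ↔ ∀ a ∈ s, ∀ b ∈ s, ¬ G.Adj a b :=
  ⟨fun hs _ ha _ hb hab => hs ha hb hab.ne hab, fun hs a ha b hb _ => hs a ha b hb⟩

section Graph

variable {G : SimpleGraph V}

omit [Fintype V] in
theorem spernerFam_edgeFam (G : SimpleGraph V) : SpernerFam (edgeFam G) := by
  rintro _ ⟨u, v, huv, rfl⟩ _ ⟨u', v', hu'v', rfl⟩ hsub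
  refine Finset.eq_of_subset_of_card_le hsub ?_
  rw [card_pair huv.ne, card_pair hu'v'.ne]

omit [Fintype V] in
theorem exists_edgeFam_subset_iff {K : Finset V} :
    (∃ B ∈ edgeFam G, B ⊆ K) ↔ ¬ G.IsIndepSet (K : Set V) := by
  simp only [SimpleGraph.isIndepSet_iff_forall_not_adj, not_forall, not_not, edgeFam,
    Set.mem_ofPred_eq, mem_coe]
  constructor
  · rintro ⟨_, ⟨u, v, huv, rfl⟩, huvK⟩
    exact ⟨u, huvK (by simp), v, huvK (by simp), huv⟩
  · rintro ⟨u, hu, v, hv, huv⟩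
    exact ⟨{u, v}, ⟨u, v, huv, rfl⟩, insert_subset hu (singleton_subset_iff.2 hv)⟩

theorem phiB_edgeFam_eq_true_iff {x : V → Bool} :
    PhiB (edgeFam G) x = true ↔ (∀ v, x v = true) ∨ G.IsIndepSet {a | x a = true} := by
  rw [phiB_eq_true_iff, SimpleGraph.isIndepSet_iff_forall_not_adj]
  constructor
  · intro hx
    by_cases hall : ∀ v, x v = true
    · exact .inl hall
    · refine .inr fun u hu v hv huv => hall ?_
      exact hx {u, v} ⟨u, v, huv, rfl⟩ (by simp [show x u = true from hu, show x v = true from hv])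
  · rintro (hall | hind) _ ⟨u, v, huv, rfl⟩ huvx
    · exact hall
    · exact absurd huv (hind u (huvx u (by simp)) v (huvx v (by simp)))

theorem minKeys_phiB_edgeFam (hG : ∃ u v, G.Adj u v) : minKeys (PhiB (edgeFam G)) = edgeFam G :=
  let ⟨u, v, huv⟩ := hG
  minKeys_phiB (spernerFam_edgeFam G) ⟨{u, v}, u, v, huv, rfl⟩

theorem isKey_iff_not_isIndepSet {h : (V → Bool) → Bool} (hk : minKeys h = edgeFam G)
    (K : Finset V) : IsKey h K ↔ ¬ G.IsIndepSet (K : Set V) :=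
  (isKey_iff_of_minKeys_eq hk).trans exists_edgeFam_subset_iff

theorem hornClosure_le_of_existsUnique_adj (hm : ∀ v, ∃! u, G.Adj v u)
    {h : (V → Bool) → Bool} (hk : minKeys h = edgeFam G) {x : V → Bool}
    (hx : G.IsIndepSet {a | x a = true}) : hornClosure h x ≤ x := by
  refine fun v => Bool.le_iff_imp.2 fun hyv => ?_
  by_contra hxv
  obtain ⟨u, hvu, -⟩ := hm v
  set S := {a | x a = true}.toFinset
  have hkey : IsKey h (insert u S) := by
    refine isKey_iff.2 fun z hz hzK => ?_
    have hxz : x ≤ z := fun a => Bool.le_iff_imp.2 fun ha =>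
      hzK a (mem_insert_of_mem (by simpa [S] using ha))
    have hzv : z v = true := Bool.le_iff_imp.1 (Pi.le_def.1 (hornClosure_le hz hxz) v) hyv
    refine isKey_iff.1 ((isKey_iff_not_isIndepSet hk {v, u}).2 ?_) z hz ?_
    · exact fun hind => SimpleGraph.isIndepSet_iff_forall_not_adj.1 hind v (by simp) u (by simp) hvu
    · simpa [hzv] using hzK u (mem_insert_self u S)
  -- `v` is the only neighbour of `u`, and `v ∉ S`
  have hu : ∀ b, G.Adj u b → x b ≠ true := fun b hub hb =>
    hxv ((hm u).unique hub hvu.symm ▸ hb)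
  refine (isKey_iff_not_isIndepSet hk _).1 hkey ?_
  rw [SimpleGraph.isIndepSet_iff_forall_not_adj] at hx ⊢
  simp only [S, coe_insert, Set.coe_toFinset, Set.mem_insert_iff, Set.mem_ofPred_eq]
  rintro a (rfl | ha) b (rfl | hb) hab
  · exact G.irrefl hab
  · exact hu b hab hb
  · exact hu a hab.symm ha
  · exact hx a ha b hb hab

theorem eq_phiB_edgeFam_of_existsUnique_adj (hm : ∀ v, ∃! u, G.Adj v u)
    {h : (V → Bool) → Bool} (hh : PureHorn h) (hk : minKeys h = edgeFam G) :
    h = PhiB (edgeFam G) := by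
  funext x
  rw [Bool.eq_iff_iff]
  refine ⟨phiB_eq_true_of_minKeys_eq hk, fun hx => ?_⟩
  rcases phiB_edgeFam_eq_true_iff.1 hx with hall | hind
  · rw [show x = fun _ => true from funext hall]
    exact hh.1
  · rw [← le_antisymm (hornClosure_le_of_existsUnique_adj hm hk hind) (le_hornClosure x)]
    exact hh.apply_hornClosure_eq_true x

-- its true points are the all-true point and the intersections of maximal independent sets
noncomputable def maxIndepHorn (G : SimpleGraph V) : (V → Bool) → Bool :=
  fun x => decide (∀ v, x v = false →
    ∃ M, Maximal G.IsIndepSet M ∧ {a | x a = true} ⊆ M ∧ v ∉ M)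

omit [DecidableEq V] in
theorem maxIndepHorn_eq_true_iff {x : V → Bool} :
    maxIndepHorn G x = true ↔
      ∀ v, x v = false → ∃ M, Maximal G.IsIndepSet M ∧ {a | x a = true} ⊆ M ∧ v ∉ M :=
  decide_eq_true_iff

omit [DecidableEq V] in
theorem pureHorn_maxIndepHorn (G : SimpleGraph V) : PureHorn (maxIndepHorn G) := by
  refine ⟨maxIndepHorn_eq_true_iff.2 fun v hv => absurd hv (by simp), fun x y hx hy => ?_⟩
  refine maxIndepHorn_eq_true_iff.2 fun v hv => ?_
  rcases Bool.and_eq_false_iff.1 hv with hxv | hyv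
  · obtain ⟨M, hM, hxM, hvM⟩ := maxIndepHorn_eq_true_iff.1 hx v hxv
    exact ⟨M, hM, fun a ha => hxM (Bool.and_eq_true_iff.1 ha).1, hvM⟩
  · obtain ⟨M, hM, hyM, hvM⟩ := maxIndepHorn_eq_true_iff.1 hy v hyv
    exact ⟨M, hM, fun a ha => hyM (Bool.and_eq_true_iff.1 ha).2, hvM⟩

theorem isKey_maxIndepHorn_iff (hG : ∃ u v, G.Adj u v) (K : Finset V) :
    IsKey (maxIndepHorn G) K ↔ ¬ G.IsIndepSet (K : Set V) := by
  constructor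
  · intro hK hind
    obtain ⟨M, hKM, hM⟩ := Finite.exists_le_maximal hind
    have hMtrue : maxIndepHorn G (fun a => decide (a ∈ M)) = true :=
      maxIndepHorn_eq_true_iff.2 fun v hv => ⟨M, hM, by simp, by simpa using hv⟩
    have hMuniv := isKey_iff.1 hK _ hMtrue fun a ha => by simpa using hKM ha
    obtain ⟨u, v, huv⟩ := hG
    exact SimpleGraph.isIndepSet_iff_forall_not_adj.1 hM.prop u (by simpa using hMuniv u) v
      (by simpa using hMuniv v) huv
  · intro hK
    obtain ⟨u, hu, v, hv, huv⟩ : ∃ u ∈ K, ∃ v ∈ K, G.Adj u v := by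
      simpa [SimpleGraph.isIndepSet_iff_forall_not_adj] using hK
    refine isKey_iff.2 fun x hx hxK w => ?_
    by_contra hxw
    obtain ⟨M, hM, hxM, -⟩ := maxIndepHorn_eq_true_iff.1 hx w (by simpa using hxw)
    exact SimpleGraph.isIndepSet_iff_forall_not_adj.1 hM.prop u (hxM (hxK u hu)) v
      (hxM (hxK v hv)) huv

theorem minKeys_maxIndepHorn (hG : ∃ u v, G.Adj u v) : minKeys (maxIndepHorn G) = edgeFam G :=
  minKeys_eq_of_isKey_iff (spernerFam_edgeFam G) fun K =>
    (isKey_maxIndepHorn_iff hG K).trans exists_edgeFam_subset_iff.symm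

omit [Fintype V] [DecidableEq V] in
theorem Maximal.mem_of_forall_adj_exists_adj {M S : Set V} {v : V}
    (hM : Maximal G.IsIndepSet M) (hSM : S ⊆ M) (hv : ∀ u, G.Adj v u → ∃ s ∈ S, G.Adj u s) :
    v ∈ M := by
  refine hM.mem_of_prop_insert (SimpleGraph.isIndepSet_iff_forall_not_adj.2 ?_)
  have hMind := SimpleGraph.isIndepSet_iff_forall_not_adj.1 hM.prop
  have hv' : ∀ u ∈ M, ¬ G.Adj v u := fun u hu hvu =>
    let ⟨s, hs, hus⟩ := hv u hvu
    hMind u hu s (hSM hs) hus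
  rintro a (rfl | ha) b (rfl | hb) hab
  · exact G.irrefl hab
  · exact hv' b hb hab
  · exact hv' a ha hab.symm
  · exact hMind a ha b hb hab

theorem maxIndepHorn_ne_phiB {S : Set V} {v : V} (hS : G.IsIndepSet S) (hv : v ∉ S)
    (hN : ∀ u, G.Adj v u → ∃ s ∈ S, G.Adj u s) : maxIndepHorn G ≠ PhiB (edgeFam G) := by
  intro heq
  have hphi : PhiB (edgeFam G) (fun a => decide (a ∈ S)) = true :=
    phiB_edgeFam_eq_true_iff.2 (.inr (by simpa using hS))
  rw [← heq, maxIndepHorn_eq_true_iff] at hphi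
  obtain ⟨M, hM, hSM, hvM⟩ := hphi v (by simpa using hv)
  exact hvM (hM.mem_of_forall_adj_exists_adj (by simpa using hSM) hN)

omit [Fintype V] [DecidableEq V] in
theorem exists_isIndepSet_dominating_neighbors_of_isIndepSet_compl {A : Set V}
    (hA : G.IsIndepSet A) (hAc : G.IsIndepSet Aᶜ) {w : V} (hw : w ∈ A)
    (hdeg : ∀ u, G.Adj w u → ∃ t, G.Adj u t ∧ t ≠ w) :
    ∃ S v, G.IsIndepSet S ∧ v ∉ S ∧ ∀ u, G.Adj v u → ∃ s ∈ S, G.Adj u s := by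
  refine ⟨A \ {w}, w, Set.Pairwise.mono Set.sdiff_subset hA, fun h => h.2 rfl, fun u hwu => ?_⟩
  obtain ⟨t, hut, htw⟩ := hdeg u hwu
  have hu : u ∉ A := fun hu => hA hw hu hwu.ne hwu
  have ht : t ∈ A := by_contra fun ht => hAc hu ht hut.ne hut
  exact ⟨t, ⟨ht, htw⟩, hut⟩

theorem exists_isIndepSet_dominating_neighbors_of_bipartite (hbip : ∃ A : Set V,
      (∀ u ∈ A, ∀ v ∈ A, ¬ G.Adj u v) ∧ (∀ u ∉ A, ∀ v ∉ A, ¬ G.Adj u v))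
    {w u₁ u₂ : V} (h₁ : G.Adj w u₁) (h₂ : G.Adj w u₂) (hne : u₁ ≠ u₂) :
    ∃ S v, G.IsIndepSet S ∧ v ∉ S ∧ ∀ u, G.Adj v u → ∃ s ∈ S, G.Adj u s := by
  by_cases hleaf : ∃ u₀, G.Adj w u₀ ∧ ∀ t, G.Adj u₀ t → t = w
  · obtain ⟨u₀, hwu₀, hu₀⟩ := hleaf
    obtain ⟨u', hwu', hu'⟩ : ∃ u', G.Adj w u' ∧ u' ≠ u₀ :=
      if h : u₁ = u₀ then ⟨u₂, h₂, h ▸ hne.symm⟩ else ⟨u₁, h₁, h⟩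
    exact ⟨{u'}, u₀, Set.pairwise_singleton _ _, hu'.symm, fun u hu => ⟨u', rfl, hu₀ u hu ▸ hwu'⟩⟩
  · push Not at hleaf
    obtain ⟨A, hA, hAc⟩ := hbip
    have hA' : G.IsIndepSet A := SimpleGraph.isIndepSet_iff_forall_not_adj.2 hA
    have hAc' : G.IsIndepSet Aᶜ := SimpleGraph.isIndepSet_iff_forall_not_adj.2 hAc
    by_cases hw : w ∈ A
    · exact exists_isIndepSet_dominating_neighbors_of_isIndepSet_compl hA' hAc' hw hleaf
    · exact exists_isIndepSet_dominating_neighbors_of_isIndepSet_compl hAc'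
        (by rwa [compl_compl]) hw hleaf

end Graph

/-- A bipartite graph without isolated vertices is a unique key graph iff its edge set is a
perfect matching, i.e. every vertex has degree exactly one. -/
theorem stmt9 [Nonempty V] (G : SimpleGraph V)
    (hbip : ∃ A : Set V,
      (∀ u ∈ A, ∀ v ∈ A, ¬ G.Adj u v) ∧ (∀ u ∉ A, ∀ v ∉ A, ¬ G.Adj u v))
    (hiso : ∀ v : V, ∃ u : V, G.Adj v u) :
    UniqueKeyHypergraph (edgeFam G) ↔ ∀ v : V, ∃! u : V, G.Adj v u := by
  have hG : ∃ u v, G.Adj u v := ⟨_, hiso (Classical.arbitrary V)⟩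
  refine ⟨fun hUK => ?_, fun hm => ⟨minKeys_phiB_edgeFam hG,
    fun _ hh hk => eq_phiB_edgeFam_of_existsUnique_adj hm hh hk⟩⟩
  by_contra hm
  obtain ⟨w, u₁, u₂, h₁, h₂, hne⟩ : ∃ w u₁ u₂, G.Adj w u₁ ∧ G.Adj w u₂ ∧ u₁ ≠ u₂ := by
    push Not at hm
    obtain ⟨w, hw⟩ := hm
    obtain ⟨u₁, h₁⟩ := hiso w
    by_contra! hno
    exact hw ⟨u₁, h₁, fun u h => (hno w u₁ u h₁ h).symm⟩
  obtain ⟨S, v, hS, hv, hN⟩ := exists_isIndepSet_dominating_neighbors_of_bipartite hbip h₁ h₂ hne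
  exact maxIndepHorn_ne_phiB hS hv hN
    (hUK.2 _ (pureHorn_maxIndepHorn G) (minKeys_maxIndepHorn hG))
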